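/- (Closeness of the modified energy to the true energy.) Assume |ψ₁(ξ)| ≤ c₀, |φ(ξ)| ≤ c₀ and |φ(ξ) − 1| ≤ c₁|ξ| for all ξ ∈ ℝ. Let ω be the smallest nonzero frequency among the ω_j (assume at least one ω_j ≠ 0). Then for all q, q̇ ∈ ℂ^d and 0 < h ≤ 1: |ℋ(q, q̇) − H(q, q̇)| ≤ C̃ min(h, ω^{-1}) ‖q‖ ‖Ω q‖ + Ĉ h² ‖q‖², where C̃ = (1/2)(2c₀² + (c₀+1) max(c₀+1, c₁))‖A‖ and Ĉ = (1/8) c₀⁴ ‖A‖². -/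

import Mathlib

open scoped BigOperators

/-- `sinc ξ = sin ξ / ξ` with `sinc 0 = 1`. -/
noncomputable def sinc (x : ℝ) : ℝ := if x = 0 then 1 else Real.sin x / x

/-- Entrywise (diagonal-matrix) action of a real function family on `ℂ^d`. -/
noncomputable def dOp {d : ℕ} (f : Fin d → ℝ) (q : EuclideanSpace ℂ (Fin d)) :
    EuclideanSpace ℂ (Fin d) := WithLp.toLp 2 (fun i => (f i : ℂ) * q i)

/-- Position update of the trigonometric integrator for the linear force `g(q) = -A q`:
`q_{n+1} = cos(hΩ) q_n + h sinc(hΩ) q̇_n + ½h² sinc(hΩ) Ψ₁ g(Φ q_n)`. -/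
noncomputable def trigStepQ {d : ℕ} (h : ℝ) (ω : Fin d → ℝ) (ψ₁ φ : ℝ → ℝ)
    (A : EuclideanSpace ℂ (Fin d) →L[ℂ] EuclideanSpace ℂ (Fin d))
    (q p : EuclideanSpace ℂ (Fin d)) : EuclideanSpace ℂ (Fin d) :=
  dOp (fun i => Real.cos (h * ω i)) q + h • dOp (fun i => sinc (h * ω i)) p
    + (h ^ 2 / 2) • dOp (fun i => sinc (h * ω i))
        (dOp (fun i => ψ₁ (h * ω i)) (-(A (dOp (fun i => φ (h * ω i)) q))))

/-- Velocity update of the trigonometric integrator for the linear force `g(q) = -A q`: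
`q̇_{n+1} = -Ω sin(hΩ) q_n + cos(hΩ) q̇_n + ½h (cos(hΩ) Ψ₁ g(Φ q_n) + Ψ₁ g(Φ q_{n+1}))`. -/
noncomputable def trigStepP {d : ℕ} (h : ℝ) (ω : Fin d → ℝ) (ψ₁ φ : ℝ → ℝ)
    (A : EuclideanSpace ℂ (Fin d) →L[ℂ] EuclideanSpace ℂ (Fin d))
    (q p : EuclideanSpace ℂ (Fin d)) : EuclideanSpace ℂ (Fin d) :=
  -(dOp (fun i => ω i * Real.sin (h * ω i)) q) + dOp (fun i => Real.cos (h * ω i)) p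
    + (h / 2) • (dOp (fun i => Real.cos (h * ω i))
          (dOp (fun i => ψ₁ (h * ω i)) (-(A (dOp (fun i => φ (h * ω i)) q))))
        + dOp (fun i => ψ₁ (h * ω i))
            (-(A (dOp (fun i => φ (h * ω i)) (trigStepQ h ω ψ₁ φ A q p)))))

/-- The modified energy
`ℋ(q,q̇) = ½‖Ωq‖² + ½‖q̇‖² + ½ Re((cos(hΩ)Φq)* A Φq) − ⅛h²‖Ψ₁ A Φq‖²`. -/
noncomputable def modEnergy {d : ℕ} (h : ℝ) (ω : Fin d → ℝ) (ψ₁ φ : ℝ → ℝ)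
    (A : EuclideanSpace ℂ (Fin d) →L[ℂ] EuclideanSpace ℂ (Fin d))
    (q p : EuclideanSpace ℂ (Fin d)) : ℝ :=
  (1 / 2) * ‖dOp ω q‖ ^ 2 + (1 / 2) * ‖p‖ ^ 2
    + (1 / 2) * (inner (𝕜 := ℂ) (dOp (fun i => Real.cos (h * ω i)) (dOp (fun i => φ (h * ω i)) q))
        (A (dOp (fun i => φ (h * ω i)) q))).re
    - (1 / 8) * h ^ 2 * ‖dOp (fun i => ψ₁ (h * ω i)) (A (dOp (fun i => φ (h * ω i)) q))‖ ^ 2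

/-- The total energy `H(q,q̇) = ½‖Ωq‖² + ½‖q̇‖² + ½ q* A q` of `q̈ = -Ω²q - Aq`. -/
noncomputable def energy {d : ℕ} (ω : Fin d → ℝ)
    (A : EuclideanSpace ℂ (Fin d) →L[ℂ] EuclideanSpace ℂ (Fin d))
    (q p : EuclideanSpace ℂ (Fin d)) : ℝ :=
  (1 / 2) * ‖dOp ω q‖ ^ 2 + (1 / 2) * ‖p‖ ^ 2 + (1 / 2) * (inner (𝕜 := ℂ) q (A q)).re

/-! The terms `½‖Ωq‖² + ½‖q̇‖²` cancel, so `ℋ - H = ½ Re(⟪cos(hΩ)Φq, AΦq⟫ - ⟪q, Aq⟫) - ⅛h²‖Ψ₁AΦq‖²`.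
Telescoping the inner-product difference through `Φq` bounds it by `‖A‖` times
`‖cos(hΩ)Φq - Φq‖`, `‖Φq - q‖` and `‖Φq‖ ≤ c₀‖q‖`. The first two are diagonal operators
`g(hΩ)` with `|g(ξ)| ≤ K min(|ξ|, 1)` (`K = 2c₀`, resp. `K = max(c₀+1, c₁)`), and since every
nonzero `ω_j` is at least `ω`, `min(hω_j, 1) ≤ min(h, ω⁻¹) ω_j`; hence
`‖g(hΩ)q‖ ≤ K min(h, ω⁻¹) ‖Ωq‖`. -/

open scoped InnerProductSpace

lemma norm_inner_map_sub_inner_map_le {𝕜 E : Type*} [RCLike 𝕜] [NormedAddCommGroup E]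
    [InnerProductSpace 𝕜 E] (A : E →L[𝕜] E) (u v q : E) :
    ‖⟪u, A v⟫_𝕜 - ⟪q, A q⟫_𝕜‖ ≤ ‖A‖ * ((‖u - v‖ + ‖v - q‖) * ‖v‖ + ‖q‖ * ‖v - q‖) := by
  have split : ⟪u, A v⟫_𝕜 - ⟪q, A q⟫_𝕜 = ⟪u - v, A v⟫_𝕜 + ⟪v - q, A v⟫_𝕜 + ⟪q, A (v - q)⟫_𝕜 := by
    simp only [inner_sub_left, map_sub, inner_sub_right]
    ring
  calc ‖⟪u, A v⟫_𝕜 - ⟪q, A q⟫_𝕜‖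
      ≤ ‖u - v‖ * ‖A v‖ + ‖v - q‖ * ‖A v‖ + ‖q‖ * ‖A (v - q)‖ := by
        rw [split]
        grw [norm_add₃_le, norm_inner_le_norm, norm_inner_le_norm, norm_inner_le_norm]
    _ ≤ ‖u - v‖ * (‖A‖ * ‖v‖) + ‖v - q‖ * (‖A‖ * ‖v‖) + ‖q‖ * (‖A‖ * ‖v - q‖) := by
        grw [A.le_opNorm v, A.le_opNorm (v - q)]
    _ = _ := by ring

lemma abs_cos_mul_sub_le {a c : ℝ} (ha : |a| ≤ c) (x : ℝ) :
    |Real.cos x * a - a| ≤ 2 * c * min |x| 1 := by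
  have hcos : |Real.cos x - 1| ≤ 2 * min |x| 1 := by
    rw [mul_min_of_nonneg _ _ zero_le_two, mul_one]
    refine le_min ?_ ?_
    · have h := Real.abs_cos_sub_cos_le x 0
      rw [Real.cos_zero, sub_zero] at h
      linarith [abs_nonneg x]
    · exact abs_le.2 ⟨by linarith [Real.neg_one_le_cos x], by linarith [Real.cos_le_one x]⟩
  rw [← sub_one_mul, abs_mul]
  calc |Real.cos x - 1| * |a| ≤ 2 * min |x| 1 * c := by gcongr
    _ = _ := by ring

lemma abs_sub_one_le_max_mul_min {a c₀ c₁ x : ℝ} (ha : |a| ≤ c₀) (ha1 : |a - 1| ≤ c₁ * |x|) :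
    |a - 1| ≤ max (c₀ + 1) c₁ * min |x| 1 := by
  have hM : 0 ≤ max (c₀ + 1) c₁ := le_max_of_le_left (by linarith [abs_nonneg a])
  rw [mul_min_of_nonneg _ _ hM, mul_one]
  refine le_min (ha1.trans (by gcongr; exact le_max_right _ _)) ?_
  calc |a - 1| ≤ |a| + |1| := abs_sub _ _
    _ ≤ max (c₀ + 1) c₁ := by rw [abs_one]; exact le_max_of_le_left (by linarith)

lemma min_abs_mul_le_min_inv_mul_abs {h ω₀ x : ℝ} (hh : 0 ≤ h) (hω₀ : 0 < ω₀)
    (hx : x ≠ 0 → ω₀ ≤ x) : min |h * x| 1 ≤ min h ω₀⁻¹ * |x| := by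
  rcases eq_or_ne x 0 with rfl | hx0
  · simp
  have hxpos : 0 < x := hω₀.trans_le (hx hx0)
  rw [abs_mul, abs_of_nonneg hh, abs_of_pos hxpos, min_mul_of_nonneg _ _ hxpos.le]
  exact min_le_min le_rfl ((one_le_inv_mul₀ hω₀).2 (hx hx0))

section dOp

variable {d : ℕ}

lemma dOp_apply (f : Fin d → ℝ) (q : EuclideanSpace ℂ (Fin d)) (i : Fin d) :
    dOp f q i = f i * q i := rfl

lemma dOp_dOp (f g : Fin d → ℝ) (q : EuclideanSpace ℂ (Fin d)) :
    dOp f (dOp g q) = dOp (fun i => f i * g i) q := by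
  ext i
  simp only [dOp_apply, Complex.ofReal_mul, mul_assoc]

lemma dOp_sub_dOp (f g : Fin d → ℝ) (q : EuclideanSpace ℂ (Fin d)) :
    dOp f q - dOp g q = dOp (fun i => f i - g i) q := by
  ext i
  simp only [PiLp.sub_apply, dOp_apply, Complex.ofReal_sub, sub_mul]

lemma dOp_sub_self (f : Fin d → ℝ) (q : EuclideanSpace ℂ (Fin d)) :
    dOp f q - q = dOp (fun i => f i - 1) q := by
  ext i
  simp only [PiLp.sub_apply, dOp_apply, Complex.ofReal_sub, Complex.ofReal_one, sub_one_mul]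

lemma norm_dOp_le_mul_norm_dOp {f g : Fin d → ℝ} {c : ℝ} (hc : 0 ≤ c)
    (hfg : ∀ i, |f i| ≤ c * |g i|) (q : EuclideanSpace ℂ (Fin d)) :
    ‖dOp f q‖ ≤ c * ‖dOp g q‖ := by
  refine (pow_le_pow_iff_left₀ (norm_nonneg _) (by positivity) two_ne_zero).1 ?_
  rw [mul_pow, EuclideanSpace.norm_sq_eq, EuclideanSpace.norm_sq_eq, Finset.mul_sum]
  gcongr with i
  simp only [dOp_apply, norm_mul, Complex.norm_real, Real.norm_eq_abs, mul_pow, ← mul_assoc]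
  gcongr ?_ * _
  rw [← mul_pow]
  gcongr
  exact hfg i

lemma norm_dOp_le {f : Fin d → ℝ} {c : ℝ} (hc : 0 ≤ c) (hf : ∀ i, |f i| ≤ c)
    (q : EuclideanSpace ℂ (Fin d)) : ‖dOp f q‖ ≤ c * ‖q‖ := by
  have hq : dOp (fun _ => 1) q = q := by
    ext i
    simp [dOp_apply]
  simpa [hq] using norm_dOp_le_mul_norm_dOp (g := fun _ => 1) hc (by simpa using hf) q

lemma norm_dOp_comp_mul_le {g : ℝ → ℝ} {K h ω₀ : ℝ} {ω : Fin d → ℝ} (hh : 0 ≤ h) (hω₀ : 0 < ω₀)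
    (hω : ∀ i, ω i ≠ 0 → ω₀ ≤ ω i) (hg : ∀ ξ, |g ξ| ≤ K * min |ξ| 1)
    (q : EuclideanSpace ℂ (Fin d)) :
    ‖dOp (fun i => g (h * ω i)) q‖ ≤ K * min h ω₀⁻¹ * ‖dOp ω q‖ := by
  have hK : 0 ≤ K := by simpa using (abs_nonneg _).trans (hg 1)
  refine norm_dOp_le_mul_norm_dOp (by positivity) (fun i => ?_) q
  calc |g (h * ω i)| ≤ K * min |h * ω i| 1 := hg _
    _ ≤ K * (min h ω₀⁻¹ * |ω i|) := by gcongr; exact min_abs_mul_le_min_inv_mul_abs hh hω₀ (hω i)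
    _ = _ := by ring

end dOp

lemma modEnergy_sub_energy {d : ℕ} (h : ℝ) (ω : Fin d → ℝ) (ψ₁ φ : ℝ → ℝ)
    (A : EuclideanSpace ℂ (Fin d) →L[ℂ] EuclideanSpace ℂ (Fin d))
    (q p : EuclideanSpace ℂ (Fin d)) :
    modEnergy h ω ψ₁ φ A q p - energy ω A q p
      = (1 / 2) * (⟪dOp (fun i => Real.cos (h * ω i)) (dOp (fun i => φ (h * ω i)) q),
            A (dOp (fun i => φ (h * ω i)) q)⟫_ℂ - ⟪q, A q⟫_ℂ).re
        - (1 / 8) * h ^ 2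
            * ‖dOp (fun i => ψ₁ (h * ω i)) (A (dOp (fun i => φ (h * ω i)) q))‖ ^ 2 := by
  rw [modEnergy, energy, Complex.sub_re]
  ring

lemma abs_half_re_sub_le (z : ℂ) {s : ℝ} (hs : 0 ≤ s) :
    |(1 / 2) * z.re - s| ≤ (1 / 2) * ‖z‖ + s := by
  have hre := abs_le.1 (Complex.abs_re_le_norm z)
  exact abs_le.2 ⟨by linarith, by linarith⟩

theorem modified_energy_close_to_energy_general {d : ℕ} (h : ℝ) (hh0 : 0 < h)
    (ω : Fin d → ℝ) (ψ₁ φ : ℝ → ℝ) (c₀ c₁ : ℝ)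
    (hψ : ∀ ξ : ℝ, |ψ₁ ξ| ≤ c₀) (hφ : ∀ ξ : ℝ, |φ ξ| ≤ c₀)
    (hφ1 : ∀ ξ : ℝ, |φ ξ - 1| ≤ c₁ * |ξ|)
    (ωmin : ℝ) (hωminpos : 0 < ωmin)
    (hmin : ∀ i, ω i ≠ 0 → ωmin ≤ ω i)
    (A : EuclideanSpace ℂ (Fin d) →L[ℂ] EuclideanSpace ℂ (Fin d)) :
    ∀ q p : EuclideanSpace ℂ (Fin d),
      |modEnergy h ω ψ₁ φ A q p - energy ω A q p|
        ≤ (1 / 2) * (2 * c₀ ^ 2 + (c₀ + 1) * max (c₀ + 1) c₁) * ‖A‖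
              * min h ωmin⁻¹ * ‖q‖ * ‖dOp ω q‖
          + (1 / 8) * c₀ ^ 4 * ‖A‖ ^ 2 * h ^ 2 * ‖q‖ ^ 2 := by
  intro q p
  have hc₀ : 0 ≤ c₀ := (abs_nonneg _).trans (hψ 0)
  set m := min h ωmin⁻¹
  set M := max (c₀ + 1) c₁
  set Φq := dOp (fun i => φ (h * ω i)) q with hΦq
  have hcos : ‖dOp (fun i => Real.cos (h * ω i)) Φq - Φq‖ ≤ 2 * c₀ * m * ‖dOp ω q‖ := by
    rw [hΦq, dOp_dOp, dOp_sub_dOp]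
    exact norm_dOp_comp_mul_le (g := fun ξ => Real.cos ξ * φ ξ - φ ξ) hh0.le hωminpos hmin
      (fun ξ => abs_cos_mul_sub_le (hφ ξ) ξ) q
  have hΦ : ‖Φq - q‖ ≤ M * m * ‖dOp ω q‖ := by
    rw [hΦq, dOp_sub_self]
    exact norm_dOp_comp_mul_le (g := fun ξ => φ ξ - 1) hh0.le hωminpos hmin
      (fun ξ => abs_sub_one_le_max_mul_min (hφ ξ) (hφ1 ξ)) q
  have hΦq_le : ‖Φq‖ ≤ c₀ * ‖q‖ := norm_dOp_le hc₀ (fun _ => hφ _) q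
  have hΨ : ‖dOp (fun i => ψ₁ (h * ω i)) (A Φq)‖ ≤ c₀ * (‖A‖ * (c₀ * ‖q‖)) :=
    (norm_dOp_le hc₀ (fun _ => hψ _) _).trans (by gcongr; exact A.le_opNorm_of_le hΦq_le)
  rw [modEnergy_sub_energy]
  refine (abs_half_re_sub_le _ (by positivity)).trans ?_
  grw [norm_inner_map_sub_inner_map_le, hcos, hΦ, hΦq_le, hΨ]
  exact le_of_eq (by ring)

/-- Lemma 1, second estimate: closeness of the modified energy to the true energy:
`|ℋ(q,q̇) − H(q,q̇)| ≤ C̃ min(h, ω⁻¹) ‖q‖‖Ωq‖ + Ĉ h² ‖q‖²` with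
`C̃ = ½(2c₀² + (c₀+1)max(c₀+1, c₁))‖A‖` and `Ĉ = ⅛c₀⁴‖A‖²`,
where `ω` is the smallest nonzero frequency. -/
theorem modified_energy_close_to_energy {d : ℕ} (h : ℝ) (hh0 : 0 < h) (hh1 : h ≤ 1)
    (ω : Fin d → ℝ) (hω : ∀ i, 0 ≤ ω i) (ψ₁ φ : ℝ → ℝ) (c₀ c₁ : ℝ)
    (hψ : ∀ ξ : ℝ, |ψ₁ ξ| ≤ c₀) (hφ : ∀ ξ : ℝ, |φ ξ| ≤ c₀)
    (hφ1 : ∀ ξ : ℝ, |φ ξ - 1| ≤ c₁ * |ξ|)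
    (ωmin : ℝ) (hmem : ∃ i, ω i = ωmin) (hωminpos : 0 < ωmin)
    (hmin : ∀ i, ω i ≠ 0 → ωmin ≤ ω i)
    (A : EuclideanSpace ℂ (Fin d) →L[ℂ] EuclideanSpace ℂ (Fin d))
    (hA : IsSelfAdjoint A) :
    ∀ q p : EuclideanSpace ℂ (Fin d),
      |modEnergy h ω ψ₁ φ A q p - energy ω A q p|
        ≤ (1 / 2) * (2 * c₀ ^ 2 + (c₀ + 1) * max (c₀ + 1) c₁) * ‖A‖
              * min h ωmin⁻¹ * ‖q‖ * ‖dOp ω q‖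
          + (1 / 8) * c₀ ^ 4 * ‖A‖ ^ 2 * h ^ 2 * ‖q‖ ^ 2 :=
  modified_energy_close_to_energy_general h hh0 ω ψ₁ φ c₀ c₁ hψ hφ hφ1 ωmin hωminpos hmin A
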